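/- If A is a demi pseudocomplemented lattice (a semi De Morgan algebra additionally satisfying a' ∧ a'' = ⊥ for all a), then the kernel of A is a Boolean algebra; in particular α ∩ α* = 0 for all α ∈ K. -/

import Mathlib

/-- A semi De Morgan algebra: a bounded distributive lattice with a unary
operation `neg` satisfying (S2)-(S5). -/
class SemiDeMorgan (L : Type*) extends DistribLattice L, BoundedOrder L where
  neg : L → L
  neg_bot : neg ⊥ = ⊤
  neg_top : neg ⊤ = ⊥
  neg_sup : ∀ a b : L, neg (a ⊔ b) = neg a ⊓ neg b
  neg_neg_inf : ∀ a b : L, neg (neg (a ⊓ b)) = neg (neg a) ⊓ neg (neg b)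
  neg_neg_neg : ∀ a : L, neg (neg (neg a)) = neg a

namespace SemiDeMorgan

variable {L : Type*} [SemiDeMorgan L]

/-- The kernel `K = {a'' : a ∈ L}`. -/
abbrev Kernel (L : Type*) [SemiDeMorgan L] : Type _ :=
  {x : L // ∃ a : L, x = neg (neg a)}

/-- `h : L → K`, `a ↦ a''`. -/
def h (a : L) : Kernel L := ⟨neg (neg a), a, rfl⟩

/-- `e : K → L`, the natural inclusion. -/
def e (α : Kernel L) : L := α.1

/-- `α ∩ β := h (e α ∧ e β)` -/
def kcap (α β : Kernel L) : Kernel L := h (e α ⊓ e β)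

/-- `α ∪ β := h ((e α ∨ e β)'')` -/
def kcup (α β : Kernel L) : Kernel L := h (neg (neg (e α ⊔ e β)))

/-- `α* := h ((e α)')` -/
def kstar (α : Kernel L) : Kernel L := h (neg (e α))

/-- `1 := h ⊤` -/
def kone : Kernel L := h (⊤ : L)

/-- `0 := h ⊥` -/
def kzero : Kernel L := h (⊥ : L)

/-! The map `h : L → K` is surjective and, because `a'''' = a''`, it carries `⊓`, `⊔`, `'`, `⊤`, `⊥`
to `∩`, `∪`, `*`, `1`, `0`. Every law of `K` is therefore the image of a law of `L` that holds up to
double negation; the complement law comes from `a'' ∧ a' = ⊥`. -/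

theorem neg_neg_neg_neg (a : L) : neg (neg (neg (neg a))) = neg (neg a) :=
  congrArg neg (neg_neg_neg a)

theorem h_eq_h {a b : L} (hab : neg (neg a) = neg (neg b)) : h a = h b :=
  Subtype.ext hab

theorem h_surjective : Function.Surjective (h : L → Kernel L) := by
  rintro ⟨x, a, rfl⟩
  exact ⟨a, rfl⟩

theorem h_neg_neg (a : L) : h (neg (neg a)) = h a :=
  h_eq_h (neg_neg_neg_neg a)

theorem h_inf (a b : L) : h (a ⊓ b) = kcap (h a) (h b) := by
  apply h_eq_h
  change _ = neg (neg (neg (neg a) ⊓ neg (neg b)))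
  rw [neg_neg_inf, neg_neg_inf, neg_neg_neg_neg, neg_neg_neg_neg]

theorem neg_sup_neg_neg (a b : L) : neg (neg (neg a) ⊔ neg (neg b)) = neg (a ⊔ b) := by
  rw [neg_sup, neg_neg_neg, neg_neg_neg, neg_sup]

theorem h_sup (a b : L) : h (a ⊔ b) = kcup (h a) (h b) := by
  apply h_eq_h
  change _ = neg (neg (neg (neg (neg (neg a) ⊔ neg (neg b)))))
  rw [neg_neg_neg_neg, neg_sup_neg_neg]

theorem h_neg (a : L) : h (neg a) = kstar (h a) := by
  apply h_eq_h
  change _ = neg (neg (neg (neg (neg a))))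
  rw [neg_neg_neg_neg]

theorem h_top : h (⊤ : L) = kone := rfl

theorem h_bot : h (⊥ : L) = kzero := rfl

theorem h_neg_inf (a b : L) : h (neg (a ⊓ b)) = h (neg a ⊔ neg b) := by
  apply h_eq_h
  rw [neg_sup, ← neg_neg_inf, neg_neg_neg]

theorem kcap_comm (α β : Kernel L) : kcap α β = kcap β α := by
  revert α β
  refine h_surjective.forall₂.2 fun a b => ?_
  rw [← h_inf, ← h_inf, inf_comm]

theorem kcup_comm (α β : Kernel L) : kcup α β = kcup β α := by
  revert α β
  refine h_surjective.forall₂.2 fun a b => ?_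
  rw [← h_sup, ← h_sup, sup_comm]

theorem kcap_assoc (α β γ : Kernel L) : kcap (kcap α β) γ = kcap α (kcap β γ) := by
  revert α β γ
  refine h_surjective.forall₃.2 fun a b c => ?_
  rw [← h_inf, ← h_inf, ← h_inf, ← h_inf, inf_assoc]

theorem kcup_assoc (α β γ : Kernel L) : kcup (kcup α β) γ = kcup α (kcup β γ) := by
  revert α β γ
  refine h_surjective.forall₃.2 fun a b c => ?_
  rw [← h_sup, ← h_sup, ← h_sup, ← h_sup, sup_assoc]

theorem kcap_kcup_self (α β : Kernel L) : kcap α (kcup α β) = α := by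
  revert α β
  refine h_surjective.forall₂.2 fun a b => ?_
  rw [← h_sup, ← h_inf, inf_sup_self]

theorem kcup_kcap_self (α β : Kernel L) : kcup α (kcap α β) = α := by
  revert α β
  refine h_surjective.forall₂.2 fun a b => ?_
  rw [← h_inf, ← h_sup, sup_inf_self]

theorem kcap_kcup_distrib (α β γ : Kernel L) :
    kcap α (kcup β γ) = kcup (kcap α β) (kcap α γ) := by
  revert α β γ
  refine h_surjective.forall₃.2 fun a b c => ?_
  rw [← h_sup, ← h_inf, ← h_inf, ← h_inf, ← h_sup, inf_sup_left]

theorem kcap_kone (α : Kernel L) : kcap α kone = α := by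
  obtain ⟨a, rfl⟩ := h_surjective α
  rw [← h_top, ← h_inf, inf_top_eq]

theorem kcup_kzero (α : Kernel L) : kcup α kzero = α := by
  obtain ⟨a, rfl⟩ := h_surjective α
  rw [← h_bot, ← h_sup, sup_bot_eq]

theorem kstar_kzero : kstar (kzero : Kernel L) = kone := by
  rw [← h_bot, ← h_neg, neg_bot, h_top]

theorem kstar_kone : kstar (kone : Kernel L) = kzero := by
  rw [← h_top, ← h_neg, neg_top, h_bot]

theorem kstar_kcup (α β : Kernel L) : kstar (kcup α β) = kcap (kstar α) (kstar β) := by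
  revert α β
  refine h_surjective.forall₂.2 fun a b => ?_
  rw [← h_sup, ← h_neg, ← h_neg, ← h_neg, ← h_inf, neg_sup]

theorem kstar_kcap (α β : Kernel L) : kstar (kcap α β) = kcup (kstar α) (kstar β) := by
  revert α β
  refine h_surjective.forall₂.2 fun a b => ?_
  rw [← h_inf, ← h_neg, ← h_neg, ← h_neg, ← h_sup, h_neg_inf]

theorem kstar_kstar (α : Kernel L) : kstar (kstar α) = α := by
  obtain ⟨a, rfl⟩ := h_surjective α
  rw [← h_neg, ← h_neg, h_neg_neg]

theorem kcap_kstar_self (hdpl : ∀ a : L, neg a ⊓ neg (neg a) = ⊥) (α : Kernel L) :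
    kcap α (kstar α) = kzero := by
  obtain ⟨a, rfl⟩ := h_surjective α
  rw [← h_neg, ← h_inf, ← h_bot]
  apply h_eq_h
  rw [neg_neg_inf, neg_neg_neg, inf_comm, hdpl, neg_bot, neg_top]

/-- If `A` is a demi pseudocomplemented lattice (an SMA with `a' ∧ a'' = ⊥`),
then its kernel is a Boolean algebra: a De Morgan algebra additionally
satisfying `α ∩ α* = 0`. -/
theorem kernel_isBoolean
    (hdpl : ∀ a : L, neg a ⊓ neg (neg a) = ⊥) :
    ((∀ α β : Kernel L, kcap α β = kcap β α) ∧
     (∀ α β : Kernel L, kcup α β = kcup β α) ∧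
     (∀ α β γ : Kernel L, kcap (kcap α β) γ = kcap α (kcap β γ)) ∧
     (∀ α β γ : Kernel L, kcup (kcup α β) γ = kcup α (kcup β γ)) ∧
     (∀ α β : Kernel L, kcap α (kcup α β) = α) ∧
     (∀ α β : Kernel L, kcup α (kcap α β) = α) ∧
     (∀ α β γ : Kernel L, kcap α (kcup β γ) = kcup (kcap α β) (kcap α γ)) ∧
     (∀ α : Kernel L, kcap α kone = α) ∧
     (∀ α : Kernel L, kcup α kzero = α) ∧
     kstar (kzero : Kernel L) = kone ∧
     kstar (kone : Kernel L) = kzero ∧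
     (∀ α β : Kernel L, kstar (kcup α β) = kcap (kstar α) (kstar β)) ∧
     (∀ α β : Kernel L, kstar (kcap α β) = kcup (kstar α) (kstar β)) ∧
     (∀ α : Kernel L, kstar (kstar α) = α)) ∧
    (∀ α : Kernel L, kcap α (kstar α) = kzero) :=
  ⟨⟨kcap_comm, kcup_comm, kcap_assoc, kcup_assoc, kcap_kcup_self, kcup_kcap_self,
      kcap_kcup_distrib, kcap_kone, kcup_kzero, kstar_kzero, kstar_kone, kstar_kcup,
      kstar_kcap, kstar_kstar⟩,
    kcap_kstar_self hdpl⟩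

end SemiDeMorgan
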